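/- For every integer k ≥ 1, the kernel of the map q ↦ x ∧ q from (P_{k-1})^3 to R^3-valued polynomial fields is exactly x·P_{k-2}, and consequently the dimension of x ∧ (P_{k-1})^3 equals 3·dim(P_{k-1,3}) − dim(P_{k-2,3}), i.e. 3·π_{k-1,3} − π_{k-2,3} where π_{s,3} = (s+1)(s+2)(s+3)/6. -/

import Mathlib

open MvPolynomial

/-- `π_{s,3}` : dimension of trivariate polynomials of degree `≤ s`, `0` for `s < 0`. -/
def pi3 (s : ℤ) : ℤ := if 0 ≤ s then (s + 1) * (s + 2) * (s + 3) / 6 else 0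

/-- `degLE p k` means `p ∈ P_k` where `k : ℤ` and `P_{-1} = {0}`. -/
def degLE3 (p : MvPolynomial (Fin 3) ℝ) (k : ℤ) : Prop :=
  p = 0 ∨ (p.totalDegree : ℤ) ≤ k

/-- component `X a * q b - X c * q d`, as a linear map in `q` -/
noncomputable def crossXcomp (a b c d : Fin 3) :
    (Fin 3 → MvPolynomial (Fin 3) ℝ) →ₗ[ℝ] MvPolynomial (Fin 3) ℝ :=
  (LinearMap.mulLeft ℝ (X a)).comp (LinearMap.proj b) -
    (LinearMap.mulLeft ℝ (X c)).comp (LinearMap.proj d)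

/-- the linear map `q ↦ x ∧ q` on trivariate polynomial vector fields -/
noncomputable def crossXL :
    (Fin 3 → MvPolynomial (Fin 3) ℝ) →ₗ[ℝ] (Fin 3 → MvPolynomial (Fin 3) ℝ) :=
  LinearMap.pi ![crossXcomp 1 2 2 1, crossXcomp 2 0 0 2, crossXcomp 0 1 1 0]

open MvPolynomial

lemma primeX3 (i : Fin 3) : Prime (X i : MvPolynomial (Fin 3) ℝ) := by
  have h0 : Prime (X 0 : MvPolynomial (Fin 3) ℝ) := by
    rw [← MulEquiv.prime_iff (MvPolynomial.finSuccEquiv ℝ 2).toRingEquiv.toMulEquiv]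
    have : (MvPolynomial.finSuccEquiv ℝ 2).toRingEquiv.toMulEquiv (X 0) = Polynomial.X :=
      MvPolynomial.finSuccEquiv_X_zero (R := ℝ) (n := 2)
    rw [this]
    exact Polynomial.prime_X
  have h := (MulEquiv.prime_iff (MvPolynomial.renameEquiv ℝ (Equiv.swap (0 : Fin 3) i)).toRingEquiv.toMulEquiv).mpr h0
  have hX : (MvPolynomial.renameEquiv ℝ (Equiv.swap (0 : Fin 3) i)).toRingEquiv.toMulEquiv (X 0)
      = X i := by
    show MvPolynomial.rename _ (X 0) = X i
    rw [rename_X, Equiv.swap_apply_left]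
  rwa [hX] at h

lemma crossXL_apply (q : Fin 3 → MvPolynomial (Fin 3) ℝ) :
    crossXL q = ![X 1 * q 2 - X 2 * q 1, X 2 * q 0 - X 0 * q 2, X 0 * q 1 - X 1 * q 0] := by
  funext i
  fin_cases i <;> rfl

lemma totalDegree_X_mul_lower {i : Fin 3} {p : MvPolynomial (Fin 3) ℝ} (hp : p ≠ 0) :
    p.totalDegree + 1 ≤ (X i * p).totalDegree := by
  obtain ⟨d, hd, hdeg⟩ := Finset.exists_mem_eq_sup p.support (support_nonempty.mpr hp)
    (fun m => m.sum fun _ e => e)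
  have hmem : (Finsupp.single i 1 + d) ∈ (X i * p).support := by
    rw [mem_support_iff, coeff_X_mul]
    exact mem_support_iff.mp hd
  have h := le_totalDegree hmem
  have hsum : (((Finsupp.single i 1 + d)).sum fun _ e => e) =
      1 + (d.sum fun _ e => e) := by
    rw [Finsupp.sum_add_index (by simp) (by intros; rfl), Finsupp.sum_single_index rfl]
  have h2 : p.totalDegree = d.sum fun _ e => e := hdeg
  omega
lemma crossXL_eq_zero_iff (q : Fin 3 → MvPolynomial (Fin 3) ℝ) :
    crossXL q = 0 ↔
      X 1 * q 2 = X 2 * q 1 ∧ X 2 * q 0 = X 0 * q 2 ∧ X 0 * q 1 = X 1 * q 0 := by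
  rw [crossXL_apply, funext_iff]
  constructor
  · intro h
    exact ⟨sub_eq_zero.mp (h 0), sub_eq_zero.mp (h 1), sub_eq_zero.mp (h 2)⟩
  · rintro ⟨h0, h1, h2⟩ i
    fin_cases i <;> simp_all [sub_eq_zero]

lemma ker_char (k : ℕ) (hk : 1 ≤ k) (q : Fin 3 → MvPolynomial (Fin 3) ℝ)
    (hq : ∀ i, ((q i).totalDegree : ℤ) ≤ (k : ℤ) - 1) :
    crossXL q = 0 ↔
      ∃ p : MvPolynomial (Fin 3) ℝ, degLE3 p ((k : ℤ) - 2) ∧ ∀ i, q i = X i * p := by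
  rw [crossXL_eq_zero_iff]
  constructor
  · rintro ⟨h0, h1, h2⟩
    have hdvd : (X 0 : MvPolynomial (Fin 3) ℝ) ∣ q 0 := by
      have hd : (X 0 : MvPolynomial (Fin 3) ℝ) ∣ X 1 * q 0 := ⟨q 1, h2.symm⟩
      rcases (primeX3 0).2.2 _ _ hd with h | h
      · exact absurd (X_dvd_X.mp h) (by decide)
      · exact h
    obtain ⟨p, hp⟩ := hdvd
    have hq1 : q 1 = X 1 * p := by
      apply mul_left_cancel₀ (X_ne_zero (0 : Fin 3))
      rw [h2, hp]; ring
    have hq2 : q 2 = X 2 * p := by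
      apply mul_left_cancel₀ (X_ne_zero (0 : Fin 3))
      rw [← h1, hp]; ring
    refine ⟨p, ?_, fun i => by fin_cases i <;> assumption⟩
    by_cases hp0 : p = 0
    · exact Or.inl hp0
    · right
      have hlow := totalDegree_X_mul_lower (i := (0 : Fin 3)) hp0
      have h9 := hq 0
      rw [hp] at h9
      omega
  · rintro ⟨p, -, hqi⟩
    refine ⟨?_, ?_, ?_⟩ <;> rw [hqi, hqi] <;> ring
/-- the equivalence between degree-≤-n monomial exponents in 3 vars and
degree-=n exponents in 4 vars -/
def snocEquiv (n : ℕ) : {P : Fin 3 → ℕ // ∑ i, P i ≤ n} ≃ {Q : Fin 4 → ℕ // ∑ i, Q i = n} where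
  toFun P := ⟨Fin.snoc P.1 (n - ∑ i, P.1 i), by
    have := P.2
    rw [Fin.sum_univ_castSucc]
    simp only [Fin.snoc_castSucc, Fin.snoc_last]
    omega⟩
  invFun Q := ⟨fun i => Q.1 i.castSucc, by
    have := Q.2
    rw [Fin.sum_univ_castSucc] at this
    simpa using Nat.le.intro this⟩
  left_inv P := by
    ext i
    simp
  right_inv Q := by
    have hQ := Q.2
    rw [Fin.sum_univ_castSucc] at hQ
    ext i
    refine Fin.lastCases ?_ (fun j => ?_) i
    · simp only [Fin.snoc_last]
      omega
    · simp

/-- monomial exponents of degree at most `n` are equivalent to `Sym (Fin 4) n` -/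
noncomputable def monEquiv (n : ℕ) :
    {m : Fin 3 →₀ ℕ // m ∈ {m : Fin 3 →₀ ℕ | (m.sum fun _ e => e) ≤ n}} ≃ Sym (Fin 4) n :=
  ((Finsupp.equivFunOnFinite.subtypeEquiv (fun m => by
      simp only [Set.mem_setOf_eq]
      rw [Finsupp.sum_fintype _ _ (fun _ => rfl)]
      rfl)).trans (snocEquiv n)).trans (Sym.equivNatSumOfFintype (Fin 4) n).symm

lemma card_monomials (n : ℕ) :
    Nat.card {m : Fin 3 →₀ ℕ // m ∈ {m : Fin 3 →₀ ℕ | (m.sum fun _ e => e) ≤ n}} =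
      (n + 3).choose 3 := by
  rw [Nat.card_congr (monEquiv n), Nat.card_eq_fintype_card, Sym.card_sym_eq_multichoose,
    Nat.multichoose_eq]
  have h4 : Fintype.card (Fin 4) + n - 1 = n + 3 := by rw [Fintype.card_fin]; omega
  rw [h4, ← Nat.choose_symm (by omega : 3 ≤ n + 3)]
  norm_num

lemma finrank_rtd (n : ℕ) :
    Module.finrank ℝ (MvPolynomial.restrictTotalDegree (Fin 3) ℝ n) = (n + 3).choose 3 := by
  classical
  have : Finite {m : Fin 3 →₀ ℕ // m ∈ {m : Fin 3 →₀ ℕ | (m.sum fun _ e => e) ≤ n}} :=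
    Finite.of_equiv _ (monEquiv n).symm
  cases nonempty_fintype {m : Fin 3 →₀ ℕ // m ∈ {m : Fin 3 →₀ ℕ | (m.sum fun _ e => e) ≤ n}}
  rw [← card_monomials n, Nat.card_eq_fintype_card]
  exact Module.finrank_eq_card_basis
    (MvPolynomial.basisRestrictSupport ℝ {m : Fin 3 →₀ ℕ | (m.sum fun _ e => e) ≤ n})
/-- a submodule pi over `Set.univ` is equivalent to the pi of the submodules -/
def piSubEquiv {R : Type*} [Semiring R] {ι : Type*} {φ : ι → Type*}
    [∀ i, AddCommMonoid (φ i)] [∀ i, Module R (φ i)] (p : ∀ i, Submodule R (φ i)) :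
    ↥(Submodule.pi Set.univ p) ≃ₗ[R] ∀ i, ↥(p i) where
  toFun q i := ⟨q.1 i, q.2 i trivial⟩
  map_add' a b := rfl
  map_smul' c a := rfl
  invFun v := ⟨fun i => (v i : φ i), fun i _ => (v i).2⟩
  left_inv q := rfl
  right_inv v := rfl

lemma six_mul_choose (n : ℕ) : 6 * (n + 3).choose 3 = (n + 1) * (n + 2) * (n + 3) := by
  have h := Nat.descFactorial_eq_factorial_mul_choose (n + 3) 3
  rw [show Nat.factorial 3 = 6 from rfl] at h
  simp [Nat.descFactorial] at h
  rw [← h]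
  ring_nf

lemma pi3_cast (n : ℕ) : pi3 (n : ℤ) = ((n + 3).choose 3 : ℤ) := by
  rw [pi3, if_pos (by positivity)]
  have h : ((n : ℤ) + 1) * ((n : ℤ) + 2) * ((n : ℤ) + 3) = 6 * ((n + 3).choose 3 : ℤ) := by
    exact_mod_cast congrArg (Nat.cast : ℕ → ℤ) (six_mul_choose n).symm
  rw [h, Int.mul_ediv_cancel_left _ (by norm_num)]

set_option maxHeartbeats 1000000 in
set_option synthInstance.maxHeartbeats 400000 in
/-- for `k ≥ 1` the kernel of `q ↦ x ∧ q` on `(P_{k-1})³` is exactly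
`x P_{k-2}`, and `dim (x ∧ (P_{k-1})³) = 3 π_{k-1,3} - π_{k-2,3}`. -/
theorem ker_crossX_and_dim (k : ℕ) (hk : 1 ≤ k) :
    (∀ q : Fin 3 → MvPolynomial (Fin 3) ℝ,
      (∀ i, ((q i).totalDegree : ℤ) ≤ (k : ℤ) - 1) →
        (crossXL q = 0 ↔
          ∃ p : MvPolynomial (Fin 3) ℝ, degLE3 p ((k : ℤ) - 2) ∧ ∀ i, q i = X i * p)) ∧
    ((Module.finrank ℝ
        (Submodule.map crossXL
          (Submodule.pi Set.univ fun _ : Fin 3 => restrictTotalDegree (Fin 3) ℝ (k - 1))) : ℤ) =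
      3 * pi3 ((k : ℤ) - 1) - pi3 ((k : ℤ) - 2)) := by
  refine ⟨ker_char k hk, ?_⟩
  classical
  set p : Fin 3 → Submodule ℝ (MvPolynomial (Fin 3) ℝ) :=
    fun _ : Fin 3 => restrictTotalDegree (Fin 3) ℝ (k - 1) with hp
  set V : Submodule ℝ (Fin 3 → MvPolynomial (Fin 3) ℝ) := Submodule.pi Set.univ p with hVdef
  set f : ↥V →ₗ[ℝ] (Fin 3 → MvPolynomial (Fin 3) ℝ) := crossXL.comp V.subtype with hf
  have hrange : LinearMap.range f = Submodule.map crossXL V := by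
    rw [hf, LinearMap.range_comp, Submodule.range_subtype]
  haveI : FiniteDimensional ℝ ↥V := Module.Finite.equiv (piSubEquiv p).symm
  have hdeg : ∀ (x : ↥V) (i : Fin 3),
      (((x : Fin 3 → MvPolynomial (Fin 3) ℝ) i).totalDegree : ℤ) ≤ (k : ℤ) - 1 := by
    intro x i
    have h := (mem_restrictTotalDegree _ _ _).mp (x.2 i trivial)
    omega
  have hVrank : Module.finrank ℝ ↥V = 3 * (k - 1 + 3).choose 3 := by
    rw [(piSubEquiv p).finrank_eq, Module.finrank_pi_fintype]
    have hone : ∀ i : Fin 3, Module.finrank ℝ ↥(p i) = (k - 1 + 3).choose 3 :=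
      fun i => finrank_rtd (k - 1)
    rw [Fin.sum_univ_three, hone 0]
    ring
  have hkerrank : (Module.finrank ℝ ↥(LinearMap.ker f) : ℤ) = pi3 ((k : ℤ) - 2) := by
    rcases eq_or_lt_of_le hk with h1 | h2
    · -- k = 1
      have hbot : LinearMap.ker f = ⊥ := by
        rw [eq_bot_iff]
        rintro x hx
        rw [LinearMap.mem_ker] at hx
        have hx' : crossXL (x : Fin 3 → MvPolynomial (Fin 3) ℝ) = 0 := hx
        obtain ⟨pp, hpp, hqi⟩ := (ker_char k hk _ (hdeg x)).mp hx'
        have hpp0 : pp = 0 := by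
          rcases hpp with h | h
          · exact h
          · exfalso; omega
        rw [Submodule.mem_bot]
        apply Subtype.ext
        funext i
        rw [hqi i, hpp0, mul_zero]
        rfl
      rw [hbot, finrank_bot]
      rw [show (k : ℤ) - 2 = -1 by omega]
      simp [pi3]
    · -- k ≥ 2
      set m := k - 2 with hm
      have hmk : (m : ℤ) = (k : ℤ) - 2 := by omega
      have hmem : ∀ pp : ↥(restrictTotalDegree (Fin 3) ℝ m),
          (fun i => X i * (pp : MvPolynomial (Fin 3) ℝ)) ∈ V := by
        intro pp i _
        have hpd := (mem_restrictTotalDegree _ _ _).mp pp.2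
        rw [hp]
        refine (mem_restrictTotalDegree _ _ _).mpr ?_
        calc (X i * (pp : MvPolynomial (Fin 3) ℝ)).totalDegree
            ≤ (X i : MvPolynomial (Fin 3) ℝ).totalDegree
              + (pp : MvPolynomial (Fin 3) ℝ).totalDegree := totalDegree_mul _ _
          _ ≤ k - 1 := by rw [totalDegree_X]; omega
      let g : ↥(restrictTotalDegree (Fin 3) ℝ m) →ₗ[ℝ] ↥(LinearMap.ker f) :=
        { toFun := fun pp => ⟨⟨fun i => X i * (pp : MvPolynomial (Fin 3) ℝ), hmem pp⟩, by
            rw [LinearMap.mem_ker]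
            show crossXL (fun i => X i * (pp : MvPolynomial (Fin 3) ℝ)) = 0
            rw [crossXL_eq_zero_iff]
            exact ⟨by ring, by ring, by ring⟩⟩
          map_add' := fun a b => by
            apply Subtype.ext; apply Subtype.ext; funext i
            show X i * (((a + b : ↥(restrictTotalDegree (Fin 3) ℝ m)) : MvPolynomial (Fin 3) ℝ))
              = X i * (a : MvPolynomial (Fin 3) ℝ) + X i * (b : MvPolynomial (Fin 3) ℝ)
            rw [Submodule.coe_add]
            ring
          map_smul' := fun c a => by
            apply Subtype.ext; apply Subtype.ext; funext i
            show X i * (((c • a : ↥(restrictTotalDegree (Fin 3) ℝ m)) : MvPolynomial (Fin 3) ℝ))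
              = c • (X i * (a : MvPolynomial (Fin 3) ℝ))
            rw [Submodule.coe_smul, smul_eq_C_mul, smul_eq_C_mul]
            ring }
      have hinj : Function.Injective g := by
        intro a b hab
        apply Subtype.ext
        have h0 := congrArg
          (fun z : ↥(LinearMap.ker f) => ((z : ↥V) : Fin 3 → MvPolynomial (Fin 3) ℝ) 0) hab
        exact mul_left_cancel₀ (X_ne_zero (0 : Fin 3)) h0
      have hsurj : Function.Surjective g := by
        rintro ⟨x, hx⟩
        rw [LinearMap.mem_ker] at hx
        have hx' : crossXL (x : Fin 3 → MvPolynomial (Fin 3) ℝ) = 0 := hx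
        obtain ⟨pp, hpp, hqi⟩ := (ker_char k hk _ (hdeg x)).mp hx'
        have hppm : pp ∈ restrictTotalDegree (Fin 3) ℝ m := by
          refine (mem_restrictTotalDegree _ _ _).mpr ?_
          rcases hpp with h | h
          · rw [h, totalDegree_zero]
            omega
          · omega
        refine ⟨⟨pp, hppm⟩, ?_⟩
        apply Subtype.ext; apply Subtype.ext; funext i
        exact (hqi i).symm
      rw [← (LinearEquiv.ofBijective g ⟨hinj, hsurj⟩).finrank_eq, finrank_rtd, ← hmk,
        pi3_cast]
  have hrn := LinearMap.finrank_range_add_finrank_ker f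
  rw [← hrange]
  have h1 : pi3 ((k : ℤ) - 1) = (((k - 1 + 3).choose 3 : ℕ) : ℤ) := by
    rw [show (k : ℤ) - 1 = ((k - 1 : ℕ) : ℤ) by omega]
    exact pi3_cast (k - 1)
  omega
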